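/- Let A be a finite left brace. Then the Wedderburn radical of A, i.e. the sum of all ideals of A that are both left nilpotent and right nilpotent, is a left nilpotent ideal of A. -/

import Mathlib

/-- A left brace: `(A,+)` abelian group, `(A,∘)` a group, with
`a ∘ (b + c) + a = a ∘ b + a ∘ c`. -/
structure LeftBrace (A : Type) [AddCommGroup A] where
  circ : A → A → A
  one : A
  inv : A → A
  circ_assoc : ∀ a b c, circ (circ a b) c = circ a (circ b c)
  one_circ : ∀ a, circ one a = a
  circ_one : ∀ a, circ a one = a
  inv_circ : ∀ a, circ (inv a) a = one
  circ_add : ∀ a b c, circ a (b + c) + a = circ a b + circ a c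

namespace LeftBrace

variable {A : Type} [AddCommGroup A]

/-- `a * b = a ∘ b - a - b`. -/
def star (B : LeftBrace A) (a b : A) : A := B.circ a b - a - b

/-- `lchain B n = Aⁿ` for `n ≥ 1` (and `lchain B 0 = ⊤`): `A¹ = A`, and
`Aⁿ⁺¹` is the additive subgroup generated by `{a * b : a ∈ A, b ∈ Aⁿ}`. -/
def lchain (B : LeftBrace A) : ℕ → AddSubgroup A
  | 0 => ⊤
  | 1 => ⊤
  | n + 2 => AddSubgroup.closure {x | ∃ a : A, ∃ b ∈ B.lchain (n + 1), x = B.star a b}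

/-- `rchain B n = A⁽ⁿ⁾` for `n ≥ 1`: `A⁽¹⁾ = A`, and `A⁽ⁿ⁺¹⁾` is the additive
subgroup generated by `{a * b : a ∈ A⁽ⁿ⁾, b ∈ A}`. -/
def rchain (B : LeftBrace A) : ℕ → AddSubgroup A
  | 0 => ⊤
  | 1 => ⊤
  | n + 2 => AddSubgroup.closure {x | ∃ a ∈ B.rchain (n + 1), ∃ b : A, x = B.star a b}

/-- `schain B n = A^[n]` for `n ≥ 1`:  `A^[1] = A`, and
`A^[i+1] = Σ_{j=1}^{i} A^[j] * A^[i+1-j]` (additive subgroup generated by the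
corresponding products). -/
def schain (B : LeftBrace A) : ℕ → AddSubgroup A
  | 0 => ⊤
  | 1 => ⊤
  | n + 2 => AddSubgroup.closure
      {x | ∃ j : Fin (n + 1), ∃ u ∈ B.schain (j.1 + 1), ∃ v ∈ B.schain (n + 1 - j.1),
        x = B.star u v}

/-- An ideal of a left brace: an additive subgroup, normal in `(A,∘)`, and
invariant under all maps `λ_a(x) = a * x + x`. -/
structure IsIdeal (B : LeftBrace A) (I : AddSubgroup A) : Prop where
  lam_mem : ∀ a : A, ∀ x ∈ I, B.star a x + x ∈ I
  conj_mem : ∀ a : A, ∀ x ∈ I, B.circ (B.circ a x) (B.inv a) ∈ I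

/-- Left chain of an ideal: `ichainL B I n = Iⁿ⁺¹`, where `I¹ = I` and `Iⁱ⁺¹`
is the additive subgroup generated by `{a * b : a ∈ I, b ∈ Iⁱ}`. -/
def ichainL (B : LeftBrace A) (I : AddSubgroup A) : ℕ → AddSubgroup A
  | 0 => I
  | n + 1 => AddSubgroup.closure {x | ∃ a ∈ I, ∃ b ∈ B.ichainL I n, x = B.star a b}

/-- Right chain of an ideal: `ichainR B I n = I⁽ⁿ⁺¹⁾`, where `I⁽¹⁾ = I` and
`I⁽ⁱ⁺¹⁾` is the additive subgroup generated by `{a * b : a ∈ I⁽ⁱ⁾, b ∈ I}`. -/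
def ichainR (B : LeftBrace A) (I : AddSubgroup A) : ℕ → AddSubgroup A
  | 0 => I
  | n + 1 => AddSubgroup.closure {x | ∃ a ∈ B.ichainR I n, ∃ b ∈ I, x = B.star a b}

end LeftBrace

/-!
Since `A` has only finitely many subgroups, it suffices that the sum of two left nilpotent
ideals `X`, `Y` is left nilpotent. Write `a ∈ X + Y` as `x ∘ y` with `x ∈ X`, `y ∈ Y`; then
`a * s = x * (y * s) + x * s + y * s`. Since all powers `Xⁱ`, `Yʲ` are `λ`-invariant, a factor
from `X` or `Y` never lowers the other degree, so multiplying `Xⁱ ∩ Yʲ` by `X + Y` lands in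
`Xⁱ⁺¹ ∩ Yʲ + Xⁱ ∩ Yʲ⁺¹`. Hence `(X + Y)ⁿ ⊆ Σ_{i+j=n} Xⁱ ∩ Yʲ`, and if `Xᵖ⁺¹ = Yᵠ⁺¹ = 0`,
every summand with `i + j = p + q + 2` vanishes.
-/

namespace LeftBrace

variable {A : Type} [AddCommGroup A] (B : LeftBrace A)

theorem circ_zero (a : A) : B.circ a 0 = a := by
  have h := B.circ_add a 0 0
  rw [add_zero] at h
  exact (add_left_cancel h).symm

theorem one_eq_zero : B.one = 0 := by
  simpa only [B.one_circ] using (B.circ_zero B.one).symm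

theorem zero_circ (a : A) : B.circ 0 a = a := by
  rw [← B.one_eq_zero, B.one_circ]

theorem inv_circ_self (a : A) : B.circ (B.inv a) a = 0 := by
  rw [B.inv_circ, B.one_eq_zero]

theorem circ_left_cancel {a x y : A} (h : B.circ a x = B.circ a y) : x = y := by
  have h' := congrArg (B.circ (B.inv a)) h
  rwa [← B.circ_assoc, ← B.circ_assoc, B.inv_circ_self, B.zero_circ, B.zero_circ] at h'

theorem circ_inv_self (a : A) : B.circ a (B.inv a) = 0 := by
  apply B.circ_left_cancel (a := B.inv a)
  rw [← B.circ_assoc, B.inv_circ_self, B.zero_circ, B.circ_zero]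

theorem inv_inv (a : A) : B.inv (B.inv a) = a := by
  apply B.circ_left_cancel (a := B.inv a)
  rw [B.circ_inv_self, B.inv_circ_self]

def lam (a : A) : A →+ A :=
  AddMonoidHom.mk' (fun x => B.circ a x - a) fun x y => by
    rw [eq_sub_of_add_eq (B.circ_add a x y)]
    abel

theorem lam_apply (a x : A) : B.lam a x = B.circ a x - a := rfl

theorem circ_eq_add_lam (a x : A) : B.circ a x = a + B.lam a x := by
  rw [lam_apply]; abel

theorem lam_lam (a b x : A) : B.lam a (B.lam b x) = B.lam (B.circ a b) x := by
  rw [B.lam_apply b x, map_sub]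
  simp only [lam_apply, ← B.circ_assoc]
  abel

theorem lam_zero_left (x : A) : B.lam 0 x = x := by
  rw [lam_apply, B.zero_circ, sub_zero]

theorem lam_inv_lam (a x : A) : B.lam (B.inv a) (B.lam a x) = x := by
  rw [B.lam_lam, B.inv_circ_self, B.lam_zero_left]

theorem lam_lam_inv (a x : A) : B.lam a (B.lam (B.inv a) x) = x := by
  rw [B.lam_lam, B.circ_inv_self, B.lam_zero_left]

theorem star_eq (a x : A) : B.star a x = B.lam a x - x := by
  rw [star, lam_apply, sub_right_comm]

def starHom (a : A) : A →+ A := B.lam a - AddMonoidHom.id A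

theorem starHom_apply (a x : A) : B.starHom a x = B.star a x := by
  rw [starHom, AddMonoidHom.sub_apply, AddMonoidHom.id_apply, star_eq]

theorem star_circ_left (a b c : A) :
    B.star (B.circ a b) c = B.star a (B.star b c) + B.star a c + B.star b c := by
  simp only [star_eq, map_sub, B.lam_lam]
  abel

theorem lam_star (c x y : A) :
    B.lam c (B.star x y) = B.star (B.circ (B.circ c x) (B.inv c)) (B.lam c y) := by
  have h : B.circ (B.circ (B.circ c x) (B.inv c)) c = B.circ c x := by
    rw [B.circ_assoc, B.inv_circ_self, B.circ_zero]
  simp only [star_eq, map_sub, B.lam_lam, h]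

theorem circ_circ_inv (a x : A) :
    B.circ (B.circ a x) (B.inv a) = B.lam a x + B.lam a (B.star x (B.inv a)) := by
  have h : B.lam a (B.inv a) = -a := by rw [lam_apply, B.circ_inv_self, zero_sub]
  rw [B.circ_eq_add_lam (B.circ a x), ← B.lam_lam, B.circ_eq_add_lam a x, star_eq, map_sub,
    h]
  abel

def LamStable (Z : AddSubgroup A) : Prop := ∀ a : A, ∀ z ∈ Z, B.lam a z ∈ Z

variable {B}

theorem LamStable.star_mem {Z : AddSubgroup A} (hZ : B.LamStable Z) (a : A) {z : A}
    (hz : z ∈ Z) : B.star a z ∈ Z := by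
  rw [B.star_eq]; exact Z.sub_mem (hZ a z hz) hz

theorem LamStable.of_lam_mem {Z : AddSubgroup A} (hZ : B.LamStable Z) {a z : A}
    (hz : B.lam a z ∈ Z) : z ∈ Z := by
  simpa only [B.lam_inv_lam] using hZ (B.inv a) _ hz

theorem isIdeal_iff {I : AddSubgroup A} :
    B.IsIdeal I ↔ B.LamStable I ∧ ∀ x ∈ I, ∀ b, B.star x b ∈ I := by
  constructor
  · intro hI
    have hlam : B.LamStable I := fun a x hx => by
      simpa only [star_eq, sub_add_cancel] using hI.lam_mem a x hx
    refine ⟨hlam, fun x hx b => hlam.of_lam_mem (a := B.inv b) ?_⟩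
    have hconj := hI.conj_mem (B.inv b) x hx
    rw [B.circ_circ_inv, B.inv_inv] at hconj
    simpa only [add_sub_cancel_left] using I.sub_mem hconj (hlam (B.inv b) x hx)
  · rintro ⟨hlam, hright⟩
    refine ⟨fun a x hx => ?_, fun a x hx => ?_⟩
    · simpa only [star_eq, sub_add_cancel] using hlam a x hx
    · rw [B.circ_circ_inv]
      exact I.add_mem (hlam a x hx) (hlam a _ (hright x hx _))

theorem IsIdeal.lamStable {I : AddSubgroup A} (hI : B.IsIdeal I) : B.LamStable I :=
  (isIdeal_iff.1 hI).1

theorem IsIdeal.star_mem_left {I : AddSubgroup A} (hI : B.IsIdeal I) {x : A} (hx : x ∈ I)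
    (b : A) : B.star x b ∈ I :=
  (isIdeal_iff.1 hI).2 x hx b

theorem isIdeal_bot : B.IsIdeal ⊥ := by
  refine isIdeal_iff.2 ⟨fun a z hz => ?_, fun x hx b => ?_⟩
  · rw [AddSubgroup.mem_bot] at hz ⊢
    rw [hz, map_zero]
  · rw [AddSubgroup.mem_bot] at hx ⊢
    rw [hx, star, B.zero_circ]
    abel

theorem exists_circ_of_mem_sup {X Y : AddSubgroup A} (hY : B.IsIdeal Y) {a : A}
    (ha : a ∈ X ⊔ Y) : ∃ x ∈ X, ∃ y ∈ Y, B.circ x y = a := by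
  obtain ⟨x, hx, y, hy, rfl⟩ := AddSubgroup.mem_sup.1 ha
  refine ⟨x, hx, B.lam (B.inv x) y, hY.lamStable _ y hy, ?_⟩
  rw [B.circ_eq_add_lam, B.lam_lam_inv]

theorem IsIdeal.sup {X Y : AddSubgroup A} (hX : B.IsIdeal X) (hY : B.IsIdeal Y) :
    B.IsIdeal (X ⊔ Y) := by
  refine isIdeal_iff.2 ⟨fun a z hz => ?_, fun a ha b => ?_⟩
  · obtain ⟨x, hx, y, hy, rfl⟩ := AddSubgroup.mem_sup.1 hz
    rw [map_add]
    exact AddSubgroup.add_mem_sup (hX.lamStable a x hx) (hY.lamStable a y hy)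
  · obtain ⟨x, hx, y, hy, rfl⟩ := exists_circ_of_mem_sup hY ha
    rw [B.star_circ_left]
    exact add_mem
      (add_mem (AddSubgroup.mem_sup_right (hY.lamStable.star_mem x (hY.star_mem_left hy b)))
        (AddSubgroup.mem_sup_left (hX.star_mem_left hx b)))
      (AddSubgroup.mem_sup_right (hY.star_mem_left hy b))

variable (B)

def starSpan (X Z : AddSubgroup A) : AddSubgroup A :=
  AddSubgroup.closure {w | ∃ x ∈ X, ∃ z ∈ Z, w = B.star x z}

variable {B}

theorem star_mem_starSpan {X Z : AddSubgroup A} {x z : A} (hx : x ∈ X) (hz : z ∈ Z) :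
    B.star x z ∈ B.starSpan X Z :=
  AddSubgroup.subset_closure ⟨x, hx, z, hz, rfl⟩

theorem starSpan_le {X Z K : AddSubgroup A} (h : ∀ x ∈ X, ∀ z ∈ Z, B.star x z ∈ K) :
    B.starSpan X Z ≤ K := by
  rw [starSpan, AddSubgroup.closure_le]
  rintro _ ⟨x, hx, z, hz, rfl⟩
  exact h x hx z hz

theorem starSpan_le_of_lamStable (X : AddSubgroup A) {Z : AddSubgroup A} (hZ : B.LamStable Z) :
    B.starSpan X Z ≤ Z :=
  starSpan_le fun x _ _ hz => hZ.star_mem x hz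

theorem starSpan_mono_right (X : AddSubgroup A) {Z Z' : AddSubgroup A} (h : Z ≤ Z') :
    B.starSpan X Z ≤ B.starSpan X Z' :=
  starSpan_le fun _ hx _ hz => star_mem_starSpan hx (h hz)

/-- `λ_c(x * z) = ((c ∘ x) ∘ c⁻¹) * λ_c(z)` and ideals are `∘`-normal. -/
theorem IsIdeal.lamStable_starSpan {X Z : AddSubgroup A} (hX : B.IsIdeal X)
    (hZ : B.LamStable Z) : B.LamStable (B.starSpan X Z) := by
  intro c w hw
  suffices B.starSpan X Z ≤ (B.starSpan X Z).comap (B.lam c) from this hw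
  refine starSpan_le fun x hx z hz => ?_
  rw [AddSubgroup.mem_comap, B.lam_star]
  exact star_mem_starSpan (hX.conj_mem c x hx) (hZ c z hz)

variable (B)

/-- `leftPow X i = Xⁱ`, shifted by one against `ichainL`, and with `X⁰ = A`. -/
def leftPow (X : AddSubgroup A) : ℕ → AddSubgroup A
  | 0 => ⊤
  | n + 1 => B.ichainL X n

variable {B}

theorem IsIdeal.lamStable_ichainL {X : AddSubgroup A} (hX : B.IsIdeal X) :
    ∀ n, B.LamStable (B.ichainL X n)
  | 0 => hX.lamStable
  | n + 1 => hX.lamStable_starSpan (hX.lamStable_ichainL n)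

theorem IsIdeal.lamStable_leftPow {X : AddSubgroup A} (hX : B.IsIdeal X) :
    ∀ i, B.LamStable (B.leftPow X i)
  | 0 => fun _ _ _ => AddSubgroup.mem_top _
  | n + 1 => hX.lamStable_ichainL n

theorem IsIdeal.star_mem_leftPow_succ {X : AddSubgroup A} (hX : B.IsIdeal X) {x s : A}
    (hx : x ∈ X) : ∀ {i}, s ∈ B.leftPow X i → B.star x s ∈ B.leftPow X (i + 1)
  | 0, _ => hX.star_mem_left hx s
  | _ + 1, hs => star_mem_starSpan hx hs

theorem IsIdeal.leftPow_antitone {X : AddSubgroup A} (hX : B.IsIdeal X) :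
    Antitone (B.leftPow X) := by
  refine antitone_nat_of_succ_le fun i => ?_
  cases i with
  | zero => exact le_top
  | succ n => exact starSpan_le_of_lamStable X (hX.lamStable_ichainL n)

theorem IsIdeal.leftPow_eq_bot {X : AddSubgroup A} (hX : B.IsIdeal X) {p i : ℕ}
    (hp : B.ichainL X p = ⊥) (hi : p < i) : B.leftPow X i = ⊥ :=
  le_bot_iff.1 (hp ▸ hX.leftPow_antitone (Nat.succ_le_of_lt hi))

section Sup

variable {X Y : AddSubgroup A}

/-- `(x ∘ y) * s = x * (y * s) + x * s + y * s`: multiplying by an element of `X ⊔ Y`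
raises the `X`-degree or the `Y`-degree. -/
theorem starSpan_sup_inf_leftPow_le (hX : B.IsIdeal X) (hY : B.IsIdeal Y) (i j : ℕ) :
    B.starSpan (X ⊔ Y) (B.leftPow X i ⊓ B.leftPow Y j) ≤
      (B.leftPow X (i + 1) ⊓ B.leftPow Y j) ⊔ (B.leftPow X i ⊓ B.leftPow Y (j + 1)) := by
  refine starSpan_le fun a ha s ⟨hsX, hsY⟩ => ?_
  obtain ⟨x, hx, y, hy, rfl⟩ := exists_circ_of_mem_sup hY ha
  have hys : B.star y s ∈ B.leftPow X i ⊓ B.leftPow Y (j + 1) :=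
    ⟨(hX.lamStable_leftPow i).star_mem y hsX, hY.star_mem_leftPow_succ hy hsY⟩
  have hxs : B.star x s ∈ B.leftPow X (i + 1) ⊓ B.leftPow Y j :=
    ⟨hX.star_mem_leftPow_succ hx hsX, (hY.lamStable_leftPow j).star_mem x hsY⟩
  have hxys : B.star x (B.star y s) ∈ B.leftPow X (i + 1) ⊓ B.leftPow Y j :=
    ⟨hX.star_mem_leftPow_succ hx hys.1,
      hY.leftPow_antitone j.le_succ ((hY.lamStable_leftPow _).star_mem x hys.2)⟩
  rw [B.star_circ_left]
  exact add_mem (add_mem (AddSubgroup.mem_sup_left hxys) (AddSubgroup.mem_sup_left hxs))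
    (AddSubgroup.mem_sup_right hys)

variable (B X Y) in
/-- A product of `n` factors, `i` from `X` and `j` from `Y`, lies in `Xⁱ ⊓ Yʲ`. -/
def mixedPow (n : ℕ) : AddSubgroup A :=
  ⨆ ij ∈ {ij : ℕ × ℕ | ij.1 + ij.2 = n}, B.leftPow X ij.1 ⊓ B.leftPow Y ij.2

theorem starSpan_sup_mixedPow_le (hX : B.IsIdeal X) (hY : B.IsIdeal Y) (n : ℕ) :
    B.starSpan (X ⊔ Y) (B.mixedPow X Y n) ≤ B.mixedPow X Y (n + 1) := by
  refine starSpan_le fun a ha s hs => ?_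
  suffices B.mixedPow X Y n ≤ (B.mixedPow X Y (n + 1)).comap (B.starHom a) by
    simpa only [AddSubgroup.mem_comap, starHom_apply] using this hs
  refine iSup₂_le fun ij hij t ht => ?_
  rw [Set.mem_ofPred_eq] at hij
  rw [AddSubgroup.mem_comap, starHom_apply]
  refine (starSpan_sup_inf_leftPow_le hX hY ij.1 ij.2).trans (sup_le ?_ ?_)
    (star_mem_starSpan ha ht)
  · exact le_iSup₂_of_le (ij.1 + 1, ij.2) (by rw [Set.mem_ofPred_eq]; omega) le_rfl
  · exact le_iSup₂_of_le (ij.1, ij.2 + 1) (by rw [Set.mem_ofPred_eq]; omega) le_rfl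

theorem ichainL_sup_le_mixedPow (hX : B.IsIdeal X) (hY : B.IsIdeal Y) :
    ∀ n, B.ichainL (X ⊔ Y) n ≤ B.mixedPow X Y (n + 1)
  | 0 => sup_le
      (le_iSup₂_of_le (1, 0) (by simp) (le_inf le_rfl le_top))
      (le_iSup₂_of_le (0, 1) (by simp) (le_inf le_top le_rfl))
  | n + 1 => (starSpan_mono_right _ (ichainL_sup_le_mixedPow hX hY n)).trans
      (starSpan_sup_mixedPow_le hX hY (n + 1))

theorem ichainL_sup_eq_bot (hX : B.IsIdeal X) (hY : B.IsIdeal Y) {p q : ℕ}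
    (hp : B.ichainL X p = ⊥) (hq : B.ichainL Y q = ⊥) :
    B.ichainL (X ⊔ Y) (p + q + 1) = ⊥ := by
  refine le_bot_iff.1 ((ichainL_sup_le_mixedPow hX hY _).trans (iSup₂_le fun ij hij => ?_))
  rw [Set.mem_ofPred_eq] at hij
  rcases lt_or_ge p ij.1 with hi | hi
  · exact inf_le_left.trans (hX.leftPow_eq_bot hp hi).le
  · exact inf_le_right.trans (hY.leftPow_eq_bot hq (by omega)).le

end Sup

theorem supClosed_leftNilpotent_ideals :
    SupClosed {I : AddSubgroup A | B.IsIdeal I ∧ ∃ n, B.ichainL I n = ⊥} := by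
  rintro X ⟨hX, p, hp⟩ Y ⟨hY, q, hq⟩
  exact ⟨hX.sup hY, p + q + 1, ichainL_sup_eq_bot hX hY hp hq⟩

end LeftBrace

/-- in a finite left brace, the Wedderburn radical (the sum of
all ideals that are both left nilpotent and right nilpotent) is a left
nilpotent ideal. -/
theorem finite_brace_wedderburnRadical_leftNilpotent {A : Type} [AddCommGroup A]
    [Finite A] (B : LeftBrace A) :
    B.IsIdeal (sSup {I : AddSubgroup A |
        B.IsIdeal I ∧ (∃ n : ℕ, B.ichainL I n = ⊥) ∧ ∃ n : ℕ, B.ichainR I n = ⊥}) ∧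
    ∃ n : ℕ,
      B.ichainL (sSup {I : AddSubgroup A |
        B.IsIdeal I ∧ (∃ n : ℕ, B.ichainL I n = ⊥) ∧ ∃ n : ℕ, B.ichainR I n = ⊥}) n = ⊥ :=
  LeftBrace.supClosed_leftNilpotent_ideals.sSup_mem (Set.toFinite _)
    ⟨LeftBrace.isIdeal_bot, 0, rfl⟩ fun _ ⟨hI, hL, _⟩ => ⟨hI, hL⟩
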